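/- arXiv:2405.10198 — 2 statements merged into one kernel-verified Lean document; each statement's English description precedes it below -/
import Mathlib

section
/- The doubly robust AIPW score is doubly robust: if Γ(O; μ̄_m, μ̄_l, p̄_m, p̄_l) = μ̄_m(X) - μ̄_l(X) + 1(D=m)(Y - μ̄_m(X))/p̄_m(X) - 1(D=l)(Y - μ̄_l(X))/p̄_l(X) with candidate nuisance functions, then E[Γ(O)] equals the ATE E(Y^m - Y^l) whenever either (i) μ̄_d = μ_d for d ∈ {m, l} (outcome regressions correct), or (ii) p̄_d = p_d for d ∈ {m, l} (propensity scores correct), provided p̄_d is bounded away from 0. -/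
/-!
For each arm `d`, the weight `1 / p̄_d(X)` can be pulled out of `E[· | X]`, which turns
`E[1(D = d)(Y - m̄_d(X)) / p̄_d(X)]` into `E[p_d(X)(μ_d(X) - m̄_d(X)) / p̄_d(X)]`. This vanishes
when `m̄_d = μ_d` and equals `E[μ_d(X) - m̄_d(X)]` when `p̄_d = p_d`, so in both cases the arm
`m̄_d(X) + 1(D = d)(Y - m̄_d(X)) / p̄_d(X)` has mean `E[μ_d(X)]`. Conditional independence of
`Y^d` and `D` given `X` gives `p_d μ_d = E[1(D = d) Y^d | X] = p_d E[Y^d | X]`, hence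
`μ_d(X) = E[Y^d | X]` by common support, and `E[μ_d(X)] = E[Y^d]`.
-/

open MeasureTheory ProbabilityTheory

theorem ProbabilityTheory.CondIndepFun.condExp_mul {Ω : Type*} {m' mΩ : MeasurableSpace Ω}
    [StandardBorelSpace Ω] {hm' : m' ≤ mΩ} {μ : Measure Ω} [IsFiniteMeasure μ]
    {f g : Ω → ℝ} (hfg : CondIndepFun m' hm' f g μ) (hf : Measurable f) (hg : Measurable g)
    (hfi : Integrable f μ) (hgi : Integrable g μ) (hfgi : Integrable (f * g) μ) :
    μ[f * g | m'] =ᵐ[μ] μ[f | m'] * μ[g | m'] := by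
  -- conditional independence is independence under almost every measure of `condExpKernel`
  have h_indep : ∀ᵐ ω ∂μ, f ⟂ᵢ[condExpKernel μ m' ω] g := by
    refine ae_of_ae_trim hm' ?_
    filter_upwards [(condIndepFun_iff_map_prod_eq_prod_map_map hf hg).mp hfg] with ω hω
    rw [indepFun_iff_map_prod_eq_prod_map_map hf.aemeasurable hg.aemeasurable]
    simpa [Kernel.map_apply _ (hf.prodMk hg), Kernel.prod_apply, Kernel.map_apply _ hf,
      Kernel.map_apply _ hg] using hω
  filter_upwards [h_indep, condExp_ae_eq_integral_condExpKernel hm' hfgi,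
    condExp_ae_eq_integral_condExpKernel hm' hfi,
    condExp_ae_eq_integral_condExpKernel hm' hgi] with ω hω hfg_eq hf_eq hg_eq
  rw [Pi.mul_apply, hfg_eq, hf_eq, hg_eq]
  exact hω.integral_mul_eq_mul_integral hf.aestronglyMeasurable hg.aestronglyMeasurable

namespace MeasureTheory

variable {Ω : Type*} {m' mΩ : MeasurableSpace Ω} {μ : Measure Ω} {r w : Ω → ℝ} {ε : ℝ}

lemma ae_norm_inv_le_of_le (hε : 0 < ε) (hw : ∀ᵐ ω ∂μ, ε ≤ w ω) :
    ∀ᵐ ω ∂μ, ‖(w ω)⁻¹‖ ≤ ε⁻¹ := by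
  filter_upwards [hw] with ω hω
  rw [norm_inv, Real.norm_of_nonneg (hε.le.trans hω)]
  exact inv_anti₀ hε hω

lemma Integrable.div_of_le (hr : Integrable r μ) (hw : AEStronglyMeasurable w μ)
    (hε : 0 < ε) (hw_bd : ∀ᵐ ω ∂μ, ε ≤ w ω) : Integrable (fun ω => r ω / w ω) μ := by
  simp only [div_eq_inv_mul]
  exact hr.bdd_mul (f := fun ω => (w ω)⁻¹) hw.aemeasurable.inv.aestronglyMeasurable
    (ae_norm_inv_le_of_le hε hw_bd)

lemma integral_div_eq_integral_condExp_div [IsFiniteMeasure μ] (hm' : m' ≤ mΩ)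
    (hw : StronglyMeasurable[m'] w) (hε : 0 < ε) (hw_bd : ∀ᵐ ω ∂μ, ε ≤ w ω)
    (hr : Integrable r μ) : ∫ ω, r ω / w ω ∂μ = ∫ ω, (μ[r | m']) ω / w ω ∂μ := by
  have h_pull : μ[(fun ω => (w ω)⁻¹) * r | m'] =ᵐ[μ] (fun ω => (w ω)⁻¹) * μ[r | m'] :=
    condExp_stronglyMeasurable_mul_of_bound hm' hw.measurable.inv.stronglyMeasurable hr _
      (ae_norm_inv_le_of_le hε hw_bd)
  simp only [div_eq_inv_mul]
  calc ∫ ω, (w ω)⁻¹ * r ω ∂μ = ∫ ω, (μ[(fun ω => (w ω)⁻¹) * r | m']) ω ∂μ :=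
        (integral_condExp hm').symm
    _ = ∫ ω, (w ω)⁻¹ * (μ[r | m']) ω ∂μ := integral_congr_ae h_pull

end MeasureTheory

section AIPW

variable {Ω β : Type*} [DecidableEq β] {D : Ω → β} {d : β} {Y Y₀ p md mb pb : Ω → ℝ}

/-- The AIPW score of the paper is `aipwArmScore D Y m m̄_m p̄_m - aipwArmScore D Y l m̄_l p̄_l`. -/
noncomputable def aipwArmScore (D : Ω → β) (Y : Ω → ℝ) (d : β) (mb pb : Ω → ℝ) (ω : Ω) : ℝ :=
  mb ω + (if D ω = d then 1 else 0) * (Y ω - mb ω) / pb ω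

lemma ite_eq_treatment_mul (hobs : ∀ ω, D ω = d → Y ω = Y₀ ω) :
    (fun ω => if D ω = d then Y ω else 0)
      = fun ω => (if D ω = d then (1 : ℝ) else 0) * Y₀ ω := by
  funext ω
  split_ifs with h
  · rw [hobs ω h, one_mul]
  · rw [zero_mul]

lemma treatment_mul_sub_eq (f : Ω → ℝ) :
    (fun ω => (if D ω = d then (1 : ℝ) else 0) * (Y ω - f ω))
      = (fun ω => if D ω = d then Y ω else 0)
        - fun ω => (if D ω = d then (1 : ℝ) else 0) * f ω := by
  funext ω
  simp only [Pi.sub_apply]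
  split_ifs <;> ring

variable {m' mΩ : MeasurableSpace Ω} {hm' : m' ≤ mΩ} {μ : Measure Ω}
  [MeasurableSpace β] [MeasurableSingletonClass β] {ε : ℝ}

lemma measurable_treatment (hD : Measurable D) :
    Measurable fun ω => if D ω = d then (1 : ℝ) else 0 :=
  measurable_const.ite (hD (measurableSet_singleton d)) measurable_const

lemma integrable_treatment_mul (hD : Measurable D) {f : Ω → ℝ} (hf : Integrable f μ) :
    Integrable (fun ω => (if D ω = d then (1 : ℝ) else 0) * f ω) μ := by
  refine hf.bdd_mul (c := 1) (measurable_treatment hD).aestronglyMeasurable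
    (ae_of_all _ fun ω => ?_)
  split_ifs <;> simp

lemma integrable_treatment [IsFiniteMeasure μ] (hD : Measurable D) :
    Integrable (fun ω => if D ω = d then (1 : ℝ) else 0) μ :=
  (integrable_const 1).mono' (measurable_treatment hD).aestronglyMeasurable
    (ae_of_all _ fun ω => by split_ifs <;> simp)

lemma integrable_treatment_mul_sub (hD : Measurable D) (hobs : ∀ ω, D ω = d → Y ω = Y₀ ω)
    (hY₀i : Integrable Y₀ μ) (hmbi : Integrable mb μ) :
    Integrable (fun ω => (if D ω = d then (1 : ℝ) else 0) * (Y ω - mb ω)) μ := by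
  rw [treatment_mul_sub_eq, ite_eq_treatment_mul hobs]
  exact (integrable_treatment_mul hD hY₀i).sub (integrable_treatment_mul hD hmbi)

lemma condExp_treatment_mul_sub [IsFiniteMeasure μ] (hD : Measurable D)
    (hobs : ∀ ω, D ω = d → Y ω = Y₀ ω) (hY₀i : Integrable Y₀ μ)
    (hmb : StronglyMeasurable[m'] mb) (hmbi : Integrable mb μ)
    (hp : p =ᵐ[μ] μ[fun ω => if D ω = d then (1 : ℝ) else 0 | m'])
    (hm : (fun ω => p ω * md ω) =ᵐ[μ] μ[fun ω => if D ω = d then Y ω else 0 | m']) :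
    μ[fun ω => (if D ω = d then (1 : ℝ) else 0) * (Y ω - mb ω) | m']
      =ᵐ[μ] fun ω => p ω * (md ω - mb ω) := by
  have hIY : Integrable (fun ω => if D ω = d then Y ω else 0) μ := by
    rw [ite_eq_treatment_mul hobs]
    exact integrable_treatment_mul hD hY₀i
  have hImb := integrable_treatment_mul (d := d) hD hmbi
  have hpull : μ[fun ω => (if D ω = d then (1 : ℝ) else 0) * mb ω | m']
      =ᵐ[μ] fun ω => (μ[fun ω => if D ω = d then (1 : ℝ) else 0 | m']) ω * mb ω :=
    condExp_mul_of_stronglyMeasurable_right hmb hImb (integrable_treatment hD)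
  rw [treatment_mul_sub_eq]
  filter_upwards [condExp_sub hIY hImb m', hm, hpull, hp] with ω h_sub h_m h_pull h_p
  rw [h_sub, Pi.sub_apply, ← h_m, h_pull, ← h_p]
  ring

lemma ae_eq_condExp_of_condIndepFun [StandardBorelSpace Ω] [IsFiniteMeasure μ]
    (hD : Measurable D) (hY₀ : Measurable Y₀) (hY₀i : Integrable Y₀ μ)
    (hobs : ∀ ω, D ω = d → Y ω = Y₀ ω) (hCIA : CondIndepFun m' hm' Y₀ D μ)
    (hp : p =ᵐ[μ] μ[fun ω => if D ω = d then (1 : ℝ) else 0 | m'])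
    (hm : (fun ω => p ω * md ω) =ᵐ[μ] μ[fun ω => if D ω = d then Y ω else 0 | m'])
    (hp_pos : ∀ᵐ ω ∂μ, p ω ≠ 0) :
    md =ᵐ[μ] μ[Y₀ | m'] := by
  have hCI : CondIndepFun m' hm' (fun ω => if D ω = d then (1 : ℝ) else 0) Y₀ μ :=
    hCIA.symm.comp (φ := fun k => if k = d then (1 : ℝ) else 0) (ψ := id)
      (measurable_const.ite (measurableSet_singleton d) measurable_const) measurable_id
  have hfactor := hCI.condExp_mul (measurable_treatment hD) hY₀ (integrable_treatment hD) hY₀i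
    (integrable_treatment_mul hD hY₀i)
  rw [ite_eq_treatment_mul hobs] at hm
  filter_upwards [hm, hfactor, hp, hp_pos] with ω h_m h_factor h_p h_pos
  refine mul_left_cancel₀ h_pos ?_
  calc p ω * md ω = (μ[fun ω => if D ω = d then (1 : ℝ) else 0 | m'] * μ[Y₀ | m']) ω :=
        h_m.trans h_factor
    _ = p ω * (μ[Y₀ | m']) ω := by rw [Pi.mul_apply, h_p]

lemma integrable_aipwArmScore (hD : Measurable D) (hobs : ∀ ω, D ω = d → Y ω = Y₀ ω)
    (hY₀i : Integrable Y₀ μ) (hmbi : Integrable mb μ) (hpb : AEStronglyMeasurable pb μ)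
    (hε : 0 < ε) (hpb_bd : ∀ᵐ ω ∂μ, ε ≤ pb ω) :
    Integrable (aipwArmScore D Y d mb pb) μ :=
  hmbi.add ((integrable_treatment_mul_sub hD hobs hY₀i hmbi).div_of_le hpb hε hpb_bd)

theorem integral_aipwArmScore [StandardBorelSpace Ω] [IsFiniteMeasure μ]
    (hD : Measurable D) (hY₀ : Measurable Y₀) (hY₀i : Integrable Y₀ μ)
    (hobs : ∀ ω, D ω = d → Y ω = Y₀ ω) (hCIA : CondIndepFun m' hm' Y₀ D μ)
    (hp : p =ᵐ[μ] μ[fun ω => if D ω = d then (1 : ℝ) else 0 | m'])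
    (hm : (fun ω => p ω * md ω) =ᵐ[μ] μ[fun ω => if D ω = d then Y ω else 0 | m'])
    (hp_pos : ∀ᵐ ω ∂μ, p ω ≠ 0)
    (hmb : StronglyMeasurable[m'] mb) (hmbi : Integrable mb μ)
    (hpb : StronglyMeasurable[m'] pb) (hε : 0 < ε) (hpb_bd : ∀ᵐ ω ∂μ, ε ≤ pb ω)
    (h_correct : mb =ᵐ[μ] md ∨ pb =ᵐ[μ] p) :
    ∫ ω, aipwArmScore D Y d mb pb ω ∂μ = ∫ ω, Y₀ ω ∂μ := by
  have hmd := ae_eq_condExp_of_condIndepFun hD hY₀ hY₀i hobs hCIA hp hm hp_pos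
  have hmdi : Integrable md μ := integrable_condExp.congr hmd.symm
  have h_integral_md : ∫ ω, md ω ∂μ = ∫ ω, Y₀ ω ∂μ :=
    (integral_congr_ae hmd).trans (integral_condExp hm')
  have hres := integrable_treatment_mul_sub hD hobs hY₀i hmbi
  have h_weighted : ∫ ω, (if D ω = d then (1 : ℝ) else 0) * (Y ω - mb ω) / pb ω ∂μ
      = ∫ ω, p ω * (md ω - mb ω) / pb ω ∂μ := by
    rw [integral_div_eq_integral_condExp_div hm' hpb hε hpb_bd hres]
    refine integral_congr_ae ?_
    filter_upwards [condExp_treatment_mul_sub hD hobs hY₀i hmb hmbi hp hm] with ω h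
    rw [h]
  unfold aipwArmScore
  rw [integral_add hmbi (hres.div_of_le (hpb.mono hm').aestronglyMeasurable hε hpb_bd),
    h_weighted, ← h_integral_md]
  rcases h_correct with h_outcome | h_propensity
  · have h_zero : (fun ω => p ω * (md ω - mb ω) / pb ω) =ᵐ[μ] fun _ => 0 := by
      filter_upwards [h_outcome] with ω h
      simp [h]
    rw [integral_congr_ae h_zero, integral_zero, add_zero]
    exact integral_congr_ae h_outcome
  · have h_cancel : (fun ω => p ω * (md ω - mb ω) / pb ω) =ᵐ[μ] fun ω => md ω - mb ω := by
      filter_upwards [h_propensity, hpb_bd] with ω h h_bd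
      rw [← h, mul_div_cancel_left₀ _ (hε.trans_le h_bd).ne']
    rw [integral_congr_ae h_cancel, integral_sub hmdi hmbi]
    ring

end AIPW

theorem aipw_double_robustness_general
    {Ω 𝒳 : Type*} [MeasurableSpace Ω] [StandardBorelSpace Ω]
    [MeasurableSpace 𝒳]
    (μ : Measure Ω) [IsProbabilityMeasure μ]
    (M : ℕ) (D : Ω → Fin M) (X : Ω → 𝒳) (Ypot : Fin M → Ω → ℝ) (Y : Ω → ℝ)
    (m l : Fin M)
    -- true nuisance functions
    (md pd : Fin M → 𝒳 → ℝ)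
    -- candidate nuisance functions
    (mbar pbar : Fin M → 𝒳 → ℝ)
    (hD : Measurable D) (hX : Measurable X)
    (hYpot : ∀ d, Measurable (Ypot d))
    (hmbar : ∀ d, Measurable (mbar d)) (hpbar : ∀ d, Measurable (pbar d))
    -- observation rule
    (hobs : ∀ ω, Y ω = Ypot (D ω) ω)
    -- CIA: Y^d ⫫ D | X for each d
    (hCIA : ∀ d, CondIndepFun (MeasurableSpace.comap X inferInstance) (hX.comap_le)
      (Ypot d) D μ)
    -- common support for the true propensity scores
    (hCS : ∀ d, ∀ᵐ ω ∂μ, 0 < pd d (X ω) ∧ pd d (X ω) < 1)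
    -- candidate propensity scores bounded away from 0 (and 1)
    (ε : ℝ) (hε : 0 < ε)
    (hpbarbd : ∀ d, d = m ∨ d = l → ∀ x, ε < pbar d x ∧ pbar d x < 1)
    -- p_d(x) = P(D = d | X = x)
    (hp : ∀ d, (fun ω => pd d (X ω))
        =ᵐ[μ] μ[(fun ω => if D ω = d then (1 : ℝ) else 0) |
            MeasurableSpace.comap X inferInstance])
    -- μ_d(x) = E(Y | X = x, D = d), i.e. p_d(X) μ_d(X) = E[1(D = d) Y | X]
    (hm : ∀ d, (fun ω => pd d (X ω) * md d (X ω))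
        =ᵐ[μ] μ[(fun ω => if D ω = d then Y ω else 0) |
            MeasurableSpace.comap X inferInstance])
    -- integrability
    (hint : ∀ d, Integrable (Ypot d) μ)
    (hintmbar : ∀ d, Integrable (fun ω => mbar d (X ω)) μ)
    -- the double robustness hypothesis: outcome regressions correct OR propensity scores correct
    (hcase :
      (∀ d, d = m ∨ d = l → (fun ω => mbar d (X ω)) =ᵐ[μ] fun ω => md d (X ω))
      ∨ (∀ d, d = m ∨ d = l → (fun ω => pbar d (X ω)) =ᵐ[μ] fun ω => pd d (X ω))) :
    ∫ ω, (mbar m (X ω) - mbar l (X ω)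
        + (if D ω = m then (1 : ℝ) else 0) * (Y ω - mbar m (X ω)) / pbar m (X ω)
        - (if D ω = l then (1 : ℝ) else 0) * (Y ω - mbar l (X ω)) / pbar l (X ω)) ∂μ
      = ∫ ω, (Ypot m ω - Ypot l ω) ∂μ := by
  have h_of_X {f : 𝒳 → ℝ} (hf : Measurable f) :
      StronglyMeasurable[MeasurableSpace.comap X inferInstance] fun ω => f (X ω) :=
    (hf.comp (comap_measurable X)).stronglyMeasurable
  have hobs_d (d : Fin M) (ω : Ω) (h : D ω = d) : Y ω = Ypot d ω := h ▸ hobs ω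
  have hpbar_bd (d : Fin M) (hd : d = m ∨ d = l) : ∀ᵐ ω ∂μ, ε ≤ pbar d (X ω) :=
    ae_of_all _ fun ω => (hpbarbd d hd (X ω)).1.le
  set arm : Fin M → Ω → ℝ := fun d =>
    aipwArmScore D Y d (fun ω => mbar d (X ω)) (fun ω => pbar d (X ω))
  have h_integrable (d : Fin M) (hd : d = m ∨ d = l) : Integrable (arm d) μ :=
    integrable_aipwArmScore hD (hobs_d d) (hint d) (hintmbar d)
      ((h_of_X (hpbar d)).mono hX.comap_le).aestronglyMeasurable hε (hpbar_bd d hd)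
  have h_integral (d : Fin M) (hd : d = m ∨ d = l) : ∫ ω, arm d ω ∂μ = ∫ ω, Ypot d ω ∂μ :=
    integral_aipwArmScore hD (hYpot d) (hint d) (hobs_d d) (hCIA d) (hp d) (hm d)
      (by filter_upwards [hCS d] with ω h using h.1.ne') (h_of_X (hmbar d)) (hintmbar d)
      (h_of_X (hpbar d)) hε (hpbar_bd d hd) (hcase.imp (· d hd) (· d hd))
  calc _ = ∫ ω, (arm m ω - arm l ω) ∂μ := by
        congr with ω
        simp only [arm, aipwArmScore]
        ring
    _ = ∫ ω, Ypot m ω ∂μ - ∫ ω, Ypot l ω ∂μ := by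
        rw [integral_sub (h_integrable m (.inl rfl)) (h_integrable l (.inr rfl)),
          h_integral m (.inl rfl), h_integral l (.inr rfl)]
    _ = _ := (integral_sub (hint m) (hint l)).symm

/-- Double robustness of the AIPW score: with candidate nuisance functions `m̄_d`, `p̄_d`
(the latter bounded away from 0 and 1), the expectation of the doubly robust score equals
the ATE `E[Y^m - Y^l]` whenever either the outcome regressions are correct
(`m̄_d = μ_d` a.s. for `d ∈ {m, l}`), or the propensity scores are correct
(`p̄_d = p_d` a.s. for `d ∈ {m, l}`). -/
theorem aipw_double_robustness
    {Ω 𝒳 : Type*} [MeasurableSpace Ω] [StandardBorelSpace Ω] [Nonempty Ω]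
    [MeasurableSpace 𝒳]
    (μ : Measure Ω) [IsProbabilityMeasure μ]
    (M : ℕ) (D : Ω → Fin M) (X : Ω → 𝒳) (Ypot : Fin M → Ω → ℝ) (Y : Ω → ℝ)
    (m l : Fin M)
    -- true nuisance functions
    (md pd : Fin M → 𝒳 → ℝ)
    -- candidate nuisance functions
    (mbar pbar : Fin M → 𝒳 → ℝ)
    (hD : Measurable D) (hX : Measurable X)
    (hYpot : ∀ d, Measurable (Ypot d))
    (hmd : ∀ d, Measurable (md d)) (hpd : ∀ d, Measurable (pd d))
    (hmbar : ∀ d, Measurable (mbar d)) (hpbar : ∀ d, Measurable (pbar d))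
    -- observation rule
    (hobs : ∀ ω, Y ω = Ypot (D ω) ω)
    -- CIA: Y^d ⫫ D | X for each d
    (hCIA : ∀ d, CondIndepFun (MeasurableSpace.comap X inferInstance) (hX.comap_le)
      (Ypot d) D μ)
    -- common support for the true propensity scores
    (hCS : ∀ d, ∀ᵐ ω ∂μ, 0 < pd d (X ω) ∧ pd d (X ω) < 1)
    -- candidate propensity scores bounded away from 0 (and 1)
    (ε : ℝ) (hε : 0 < ε)
    (hpbarbd : ∀ d, d = m ∨ d = l → ∀ x, ε < pbar d x ∧ pbar d x < 1)
    -- p_d(x) = P(D = d | X = x)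
    (hp : ∀ d, (fun ω => pd d (X ω))
        =ᵐ[μ] μ[(fun ω => if D ω = d then (1 : ℝ) else 0) |
            MeasurableSpace.comap X inferInstance])
    -- μ_d(x) = E(Y | X = x, D = d), i.e. p_d(X) μ_d(X) = E[1(D = d) Y | X]
    (hm : ∀ d, (fun ω => pd d (X ω) * md d (X ω))
        =ᵐ[μ] μ[(fun ω => if D ω = d then Y ω else 0) |
            MeasurableSpace.comap X inferInstance])
    -- integrability
    (hint : ∀ d, Integrable (Ypot d) μ)
    (hintmd : ∀ d, Integrable (fun ω => md d (X ω)) μ)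
    (hintmbar : ∀ d, Integrable (fun ω => mbar d (X ω)) μ)
    -- the double robustness hypothesis: outcome regressions correct OR propensity scores correct
    (hcase :
      (∀ d, d = m ∨ d = l → (fun ω => mbar d (X ω)) =ᵐ[μ] fun ω => md d (X ω))
      ∨ (∀ d, d = m ∨ d = l → (fun ω => pbar d (X ω)) =ᵐ[μ] fun ω => pd d (X ω))) :
    ∫ ω, (mbar m (X ω) - mbar l (X ω)
        + (if D ω = m then (1 : ℝ) else 0) * (Y ω - mbar m (X ω)) / pbar m (X ω)
        - (if D ω = l then (1 : ℝ) else 0) * (Y ω - mbar l (X ω)) / pbar l (X ω)) ∂μ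
      = ∫ ω, (Ypot m ω - Ypot l ω) ∂μ :=
  aipw_double_robustness_general μ M D X Ypot Y m l md pd mbar pbar hD hX hYpot hmbar hpbar hobs
    hCIA hCS ε hε hpbarbd hp hm hint hintmbar hcase
end

section
/- The grf ATE score is Neyman-orthogonal: with the score ψ(O; θ, η) = Γ^grf(O; η) - θ where η = (θ_{1,0},...,θ_{M-1,0}, μ, p_1,...,p_{M-1}), the Gateaux derivative of the map r ↦ E[ψ(O; θ⁰, η⁰ + r(η - η⁰))] at r = 0 is zero for all directions η - η⁰ in the nuisance space: it reduces to E[δ_{θ(m,0)} + δ_{μ(m)} - δ_{μ(0)}] = 0, where δ_{μ(0)} = δ_μ - ∑_{d>0} p_d⁰ δ_{θ(d,0)} - ∑_{d>0} δ_{p(d)} θ_{d,0}⁰ (at r=0) and δ_{μ(m)} = δ_{μ(0)} + δ_{θ(m,0)}. -/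
open MeasureTheory ProbabilityTheory Filter Topology

/-!
Expanding `∑_{d ≠ 0} (p_d + r δp_d) (θ_d + r δθ_d)` and using `∑_{d ≠ 0} p_d θ_d = μ - μ_0`,
`θ_m = μ_m - μ_0` and `1 - ∑_{d ≠ 0} (p_d + r δp_d) = p_0 + r δp_0`, the perturbed score becomes
`θ_m + r δθ_m + A_m(r) - A_0(r)` with
`A_d(r) = 1{D = d} (Y - μ_d(X) + r β_d(X) + r² γ(X)) / (p_d(X) + r δp_d(X))`,
where `β_0 = ∑_{d ≠ 0} (p_d δθ_d + δp_d θ_d) - δμ`, `β_m = β_0 - δθ_m`, `γ = ∑_{d ≠ 0} δp_d δθ_d`.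
Everything is bounded and the denominators stay away from `0`, so we may differentiate under the
integral: `A_d` contributes `E[1{D = d} (β_d p_d - (Y - μ_d) δp_d) / p_d²]`. Conditioning on `X`
replaces `1{D = d}` by `p_d` and `1{D = d} (Y - μ_d)` by `0`, leaving `E[β_d]`. The derivative is
therefore `E[δθ_m + β_m - β_0] = 0`.
-/

theorem abs_add_mul_le_of_abs_le_one {a b r : ℝ} (hr : |r| ≤ 1) : |a + r * b| ≤ |a| + |b| :=
  (abs_add_le _ _).trans <| add_le_add le_rfl <| by
    rw [abs_mul]; exact mul_le_of_le_one_left (abs_nonneg _) hr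

theorem abs_add_mul_add_sq_mul_le {a b c r : ℝ} (hr : |r| ≤ 1) :
    |a + r * b + r ^ 2 * c| ≤ |a| + |b| + |c| := by
  rw [show a + r * b + r ^ 2 * c = a + r * (b + r * c) by ring, add_assoc]
  exact (abs_add_mul_le_of_abs_le_one hr).trans
    (add_le_add le_rfl (abs_add_mul_le_of_abs_le_one hr))

theorem abs_sum_le_card_mul {ι : Type*} (s : Finset ι) {f : ι → ℝ} {K : ℝ}
    (hf : ∀ i ∈ s, |f i| ≤ K) : |∑ i ∈ s, f i| ≤ s.card * K := by
  simpa using norm_sum_le_of_le s (f := f) (n := fun _ => K) hf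

theorem sum_affine_mul_affine {ι R : Type*} [CommSemiring R] (s : Finset ι) (a b c d : ι → R)
    (r : R) :
    ∑ i ∈ s, (a i + r * b i) * (c i + r * d i)
      = ∑ i ∈ s, a i * c i + r * ∑ i ∈ s, (a i * d i + b i * c i)
        + r ^ 2 * ∑ i ∈ s, b i * d i := by
  rw [Finset.mul_sum, Finset.mul_sum, ← Finset.sum_add_distrib, ← Finset.sum_add_distrib]
  exact Finset.sum_congr rfl fun i _ => by ring

theorem one_sub_sum_filter_ne {ι : Type*} [Fintype ι] [DecidableEq ι] {f : ι → ℝ} (j : ι)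
    (hf : ∑ i, f i = 1) : 1 - ∑ i ∈ Finset.univ.filter (fun i => i ≠ j), f i = f j := by
  rw [Finset.filter_ne', ← hf, ← Finset.add_sum_erase _ _ (Finset.mem_univ j)]
  ring

theorem sum_filter_ne_mul_sub {ι : Type*} [Fintype ι] [DecidableEq ι] {p : ι → ℝ} (f : ι → ℝ)
    (j : ι) (hp : ∑ i, p i = 1) :
    ∑ i ∈ Finset.univ.filter (fun i => i ≠ j), p i * (f i - f j) = ∑ i, p i * f i - f j := by
  rw [Finset.sum_filter_of_ne fun i _ h => by rintro rfl; simp at h]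
  simp [mul_sub, Finset.sum_sub_distrib, ← Finset.sum_mul, hp]

theorem hasDerivAt_quadratic_div_affine {a b c u v r : ℝ} (h : u + r * v ≠ 0) :
    HasDerivAt (fun t => (a + t * b + t ^ 2 * c) / (u + t * v))
      (((b + 2 * r * c) * (u + r * v) - (a + r * b + r ^ 2 * c) * v) / (u + r * v) ^ 2) r := by
  have hnum : HasDerivAt (fun t => a + t * b + t ^ 2 * c) (b + 2 * r * c) r :=
    ((((hasDerivAt_id' r).mul_const b).const_add a).add
      ((hasDerivAt_pow 2 r).mul_const c)).congr_deriv (by norm_num)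
  have hden : HasDerivAt (fun t => u + t * v) v r := by
    simpa using ((hasDerivAt_id' r).mul_const v).const_add u
  exact hnum.div hden h

theorem abs_deriv_quadratic_div_affine_le {a b c u v r C δ : ℝ} (hδ : 0 < δ)
    (ha : |a| ≤ C) (hb : |b| ≤ C) (hc : |c| ≤ C) (hu : |u| ≤ C) (hv : |v| ≤ C)
    (hr : |r| ≤ 1) (hden : δ ≤ u + r * v) :
    |((b + 2 * r * c) * (u + r * v) - (a + r * b + r ^ 2 * c) * v) / (u + r * v) ^ 2|
      ≤ 9 * C ^ 2 / δ ^ 2 := by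
  have hder : |b + 2 * r * c| ≤ 3 * C := by
    rw [show b + 2 * r * c = b + r * (2 * c) by ring]
    refine (abs_add_mul_le_of_abs_le_one hr).trans ?_
    rw [abs_mul, abs_two]; linarith
  have hlin : |u + r * v| ≤ 2 * C := by
    linarith [abs_add_mul_le_of_abs_le_one (a := u) (b := v) hr]
  have hnum : |a + r * b + r ^ 2 * c| ≤ 3 * C := by
    linarith [abs_add_mul_add_sq_mul_le (a := a) (b := b) (c := c) hr]
  rw [abs_div, abs_of_pos (pow_pos (hδ.trans_le hden) 2)]
  gcongr
  calc _ ≤ |b + 2 * r * c| * |u + r * v| + |a + r * b + r ^ 2 * c| * |v| :=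
        (abs_sub _ _).trans_eq (by rw [abs_mul, abs_mul])
    _ ≤ 3 * C * (2 * C) + 3 * C * C := by
        have hC : 0 ≤ C := (abs_nonneg a).trans ha
        gcongr
    _ = 9 * C ^ 2 := by ring

theorem hasDerivAt_integral_add_mul {Ω : Type*} [MeasurableSpace Ω] {μ : Measure Ω}
    {f g : Ω → ℝ} (hf : Integrable f μ) (hg : Integrable g μ) (x : ℝ) :
    HasDerivAt (fun r => ∫ ω, f ω + r * g ω ∂μ) (∫ ω, g ω ∂μ) x := by
  have h : (fun r => ∫ ω, f ω + r * g ω ∂μ) = fun r => (∫ ω, f ω ∂μ) + r * ∫ ω, g ω ∂μ :=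
    funext fun r => by rw [integral_add hf (hg.const_mul r), integral_const_mul]
  rw [h]
  simpa using ((hasDerivAt_id' x).mul_const (∫ ω, g ω ∂μ)).const_add (∫ ω, f ω ∂μ)

theorem hasDerivAt_integral_quadratic_div_affine {Ω : Type*} [MeasurableSpace Ω]
    {μ : Measure Ω} [IsFiniteMeasure μ] {a b c u v : Ω → ℝ} {C ε : ℝ} (hε : 0 < ε)
    (ha : AEMeasurable a μ) (hb : AEMeasurable b μ) (hc : AEMeasurable c μ)
    (hu : AEMeasurable u μ) (hv : AEMeasurable v μ)
    (haC : ∀ ω, |a ω| ≤ C) (hbC : ∀ ω, |b ω| ≤ C) (hcC : ∀ ω, |c ω| ≤ C)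
    (huC : ∀ ω, |u ω| ≤ C) (hvC : ∀ ω, |v ω| ≤ C) (huε : ∀ ω, ε ≤ u ω) :
    (∀ᶠ r in 𝓝 0,
      Integrable (fun ω => (a ω + r * b ω + r ^ 2 * c ω) / (u ω + r * v ω)) μ) ∧
    HasDerivAt (fun r => ∫ ω, (a ω + r * b ω + r ^ 2 * c ω) / (u ω + r * v ω) ∂μ)
      (∫ ω, (b ω * u ω - a ω * v ω) / u ω ^ 2 ∂μ) 0 := by
  set s : Set ℝ := {r | |r| < 1 ∧ |r| * C < ε / 2}
  have hs : s ∈ 𝓝 0 :=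
    ((isOpen_lt continuous_abs continuous_const).inter
      (isOpen_lt (continuous_abs.mul continuous_const) continuous_const)).mem_nhds
      (by simp [hε])
  have hden : ∀ r ∈ s, ∀ ω, ε / 2 ≤ u ω + r * v ω := by
    intro r hr ω
    have : |r * v ω| ≤ |r| * C := by rw [abs_mul]; gcongr; exact hvC ω
    linarith [neg_abs_le (r * v ω), huε ω, hr.2]
  have hint : ∀ r ∈ s,
      Integrable (fun ω => (a ω + r * b ω + r ^ 2 * c ω) / (u ω + r * v ω)) μ := by
    intro r hr
    refine Integrable.of_bound (by fun_prop : AEMeasurable _ μ).aestronglyMeasurable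
      ((C + C + C) / (ε / 2)) (ae_of_all _ fun ω => ?_)
    rw [Real.norm_eq_abs, abs_div, abs_of_pos ((half_pos hε).trans_le (hden r hr ω))]
    have hC : 0 ≤ C := (abs_nonneg _).trans (haC ω)
    gcongr
    · exact (abs_add_mul_add_sq_mul_le hr.1.le).trans (by linarith [haC ω, hbC ω, hcC ω])
    · exact hden r hr ω
  have hderiv := hasDerivAt_integral_of_dominated_loc_of_deriv_le
    (bound := fun _ => 9 * C ^ 2 / (ε / 2) ^ 2) hs
    (eventually_of_mem hs fun r hr => (hint r hr).aestronglyMeasurable)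
    (hint 0 (mem_of_mem_nhds hs)) (by fun_prop : AEMeasurable _ μ).aestronglyMeasurable
    (ae_of_all _ fun ω r hr => abs_deriv_quadratic_div_affine_le (half_pos hε) (haC ω) (hbC ω)
      (hcC ω) (huC ω) (hvC ω) hr.1.le (hden r hr ω))
    (integrable_const _)
    (ae_of_all _ fun ω r hr =>
      hasDerivAt_quadratic_div_affine ((half_pos hε).trans_le (hden r hr ω)).ne')
  refine ⟨eventually_of_mem hs hint, ?_⟩
  simpa using hderiv.2

theorem integral_mul_condExp_of_stronglyMeasurable {Ω : Type*} {m m₀ : MeasurableSpace Ω}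
    {μ : Measure Ω} (hm : m ≤ m₀) [SigmaFinite (μ.trim hm)] {g f : Ω → ℝ}
    (hg : StronglyMeasurable[m] g) (hgf : Integrable (fun ω => g ω * f ω) μ)
    (hf : Integrable f μ) :
    ∫ ω, g ω * f ω ∂μ = ∫ ω, g ω * μ[f | m] ω ∂μ := by
  rw [← integral_condExp hm]
  exact integral_congr_ae (condExp_mul_of_stronglyMeasurable_left hg hgf hf)

theorem integral_ipw_deriv_eq {Ω 𝒳 : Type*} [MeasurableSpace Ω] [MeasurableSpace 𝒳]
    {μ : Measure Ω} [IsFiniteMeasure μ] {X : Ω → 𝒳} (hX : Measurable X) {I Y : Ω → ℝ}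
    {m β p δ : 𝒳 → ℝ} {C ε : ℝ} (hε : 0 < ε)
    (hI : Integrable I μ) (hIY : Integrable (fun ω => I ω * Y ω) μ)
    (hm : Measurable m) (hβ : Measurable β) (hp : Measurable p) (hδ : Measurable δ)
    (hmC : ∀ x, |m x| ≤ C) (hβC : ∀ x, |β x| ≤ C) (hδC : ∀ x, |δ x| ≤ C)
    (hpε : ∀ x, ε ≤ p x)
    (hIp : (fun ω => p (X ω)) =ᵐ[μ] μ[I | MeasurableSpace.comap X inferInstance])
    (hIYp : (fun ω => p (X ω) * m (X ω)) =ᵐ[μ]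
      μ[fun ω => I ω * Y ω | MeasurableSpace.comap X inferInstance]) :
    ∫ ω, (I ω * β (X ω) * p (X ω) - I ω * (Y ω - m (X ω)) * δ (X ω)) / p (X ω) ^ 2 ∂μ
      = ∫ ω, β (X ω) ∂μ := by
  have hmX := hX.comap_le
  have hp0 : ∀ x, 0 < p x := fun x => hε.trans_le (hpε x)
  set g₁ : 𝒳 → ℝ := fun x => β x / p x + m x * δ x / p x ^ 2
  set g₂ : 𝒳 → ℝ := fun x => δ x / p x ^ 2
  have hg₁ : Measurable g₁ := by fun_prop
  have hg₂ : Measurable g₂ := by fun_prop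
  have hg₁C : ∀ x, ‖g₁ x‖ ≤ C / ε + C * C / ε ^ 2 := fun x => by
    have hC : 0 ≤ C := (abs_nonneg _).trans (hmC x)
    refine (abs_add_le _ _).trans (add_le_add ?_ ?_)
    · rw [abs_div, abs_of_pos (hp0 x)]; gcongr; exacts [hβC x, hpε x]
    · rw [abs_div, abs_mul, abs_of_pos (pow_pos (hp0 x) 2)]
      gcongr; exacts [hmC x, hδC x, hpε x]
  have hg₂C : ∀ x, ‖g₂ x‖ ≤ C / ε ^ 2 := fun x => by
    have hC : 0 ≤ C := (abs_nonneg _).trans (hmC x)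
    rw [Real.norm_eq_abs, abs_div, abs_of_pos (pow_pos (hp0 x) 2)]
    gcongr; exacts [hδC x, hpε x]
  have hpX : Integrable (fun ω => p (X ω)) μ := integrable_condExp.congr hIp.symm
  have hpmX : Integrable (fun ω => p (X ω) * m (X ω)) μ := integrable_condExp.congr hIYp.symm
  have hg₁X := ae_of_all μ fun ω => hg₁C (X ω)
  have hg₂X := ae_of_all μ fun ω => hg₂C (X ω)
  have i₁ := hI.bdd_mul (hg₁.comp hX).aestronglyMeasurable hg₁X
  have i₂ := hIY.bdd_mul (hg₂.comp hX).aestronglyMeasurable hg₂X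
  have i₃ := hpX.bdd_mul (hg₁.comp hX).aestronglyMeasurable hg₁X
  have i₄ := hpmX.bdd_mul (hg₂.comp hX).aestronglyMeasurable hg₂X
  calc _ = ∫ ω, g₁ (X ω) * I ω - g₂ (X ω) * (I ω * Y ω) ∂μ := by
        refine integral_congr_ae (ae_of_all _ fun ω => ?_)
        have := hp0 (X ω)
        simp only [g₁, g₂]; field_simp; ring
    _ = ∫ ω, g₁ (X ω) * I ω ∂μ - ∫ ω, g₂ (X ω) * (I ω * Y ω) ∂μ := integral_sub i₁ i₂
    _ = ∫ ω, g₁ (X ω) * p (X ω) ∂μ - ∫ ω, g₂ (X ω) * (p (X ω) * m (X ω)) ∂μ := by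
        rw [integral_mul_condExp_of_stronglyMeasurable hmX (g := fun ω => g₁ (X ω))
            (hg₁.comp (comap_measurable X)).stronglyMeasurable i₁ hI,
          integral_mul_condExp_of_stronglyMeasurable hmX (g := fun ω => g₂ (X ω))
            (hg₂.comp (comap_measurable X)).stronglyMeasurable i₂ hIY]
        congr 1 <;> refine integral_congr_ae ?_
        · filter_upwards [hIp] with ω hω using by rw [hω]
        · filter_upwards [hIYp] with ω hω using by rw [hω]
    _ = ∫ ω, g₁ (X ω) * p (X ω) - g₂ (X ω) * (p (X ω) * m (X ω)) ∂μ :=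
        (integral_sub i₃ i₄).symm
    _ = ∫ ω, β (X ω) ∂μ := by
        refine integral_congr_ae (ae_of_all _ fun ω => ?_)
        have := hp0 (X ω)
        simp only [g₁, g₂]; field_simp; ring

theorem hasDerivAt_integral_ipw {Ω 𝒳 : Type*} [MeasurableSpace Ω] [MeasurableSpace 𝒳]
    {μ : Measure Ω} [IsFiniteMeasure μ] {X : Ω → 𝒳} (hX : Measurable X) {I Y : Ω → ℝ}
    {m β γ p δ : 𝒳 → ℝ} {C ε : ℝ} (hε : 0 < ε)
    (hI : AEMeasurable I μ) (hY : AEMeasurable Y μ)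
    (hm : Measurable m) (hβ : Measurable β) (hγ : Measurable γ) (hp : Measurable p)
    (hδ : Measurable δ) (hI1 : ∀ ω, |I ω| ≤ 1) (hYC : ∀ ω, |Y ω| ≤ C)
    (hmC : ∀ x, |m x| ≤ C) (hβC : ∀ x, |β x| ≤ C) (hγC : ∀ x, |γ x| ≤ C)
    (hpC : ∀ x, |p x| ≤ C) (hδC : ∀ x, |δ x| ≤ C) (hpε : ∀ x, ε ≤ p x)
    (hIp : (fun ω => p (X ω)) =ᵐ[μ] μ[I | MeasurableSpace.comap X inferInstance])
    (hIYp : (fun ω => p (X ω) * m (X ω)) =ᵐ[μ]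
      μ[fun ω => I ω * Y ω | MeasurableSpace.comap X inferInstance]) :
    (∀ᶠ r in 𝓝 0, Integrable (fun ω => I ω * (Y ω - m (X ω) + r * β (X ω) + r ^ 2 * γ (X ω))
      / (p (X ω) + r * δ (X ω))) μ) ∧
    HasDerivAt (fun r => ∫ ω, I ω * (Y ω - m (X ω) + r * β (X ω) + r ^ 2 * γ (X ω))
      / (p (X ω) + r * δ (X ω)) ∂μ) (∫ ω, β (X ω) ∂μ) 0 := by
  have hIz : ∀ ω {z K : ℝ}, |z| ≤ K → |I ω * z| ≤ K := fun ω z K hz => by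
    rw [abs_mul]; exact (mul_le_of_le_one_left (abs_nonneg z) (hI1 ω)).trans hz
  have hC : ∀ ω, C ≤ 2 * C := fun ω => by linarith [(abs_nonneg _).trans (hYC ω)]
  have hF : ∀ r ω,
      I ω * (Y ω - m (X ω) + r * β (X ω) + r ^ 2 * γ (X ω)) / (p (X ω) + r * δ (X ω))
        = (I ω * (Y ω - m (X ω)) + r * (I ω * β (X ω)) + r ^ 2 * (I ω * γ (X ω)))
          / (p (X ω) + r * δ (X ω)) := fun r ω => by ring
  obtain ⟨hint, hderiv⟩ := hasDerivAt_integral_quadratic_div_affine (μ := μ)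
    (a := fun ω => I ω * (Y ω - m (X ω))) (b := fun ω => I ω * β (X ω))
    (c := fun ω => I ω * γ (X ω)) (u := fun ω => p (X ω)) (v := fun ω => δ (X ω))
    (C := 2 * C) hε
    (by fun_prop) (by fun_prop) (by fun_prop) (by fun_prop) (by fun_prop)
    (fun ω => hIz ω ((abs_sub _ _).trans (by linarith [hYC ω, hmC (X ω)])))
    (fun ω => hIz ω ((hβC _).trans (hC ω))) (fun ω => hIz ω ((hγC _).trans (hC ω)))
    (fun ω => (hpC _).trans (hC ω)) (fun ω => (hδC _).trans (hC ω)) (fun ω => hpε (X ω))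
  simp_rw [hF]
  refine ⟨hint, hderiv.congr_deriv
    (integral_ipw_deriv_eq hX hε ?_ ?_ hm hβ hp hδ hmC hβC hδC hpε hIp hIYp)⟩
  · exact Integrable.of_bound hI.aestronglyMeasurable 1 (ae_of_all _ hI1)
  · exact Integrable.of_bound (hI.mul hY).aestronglyMeasurable C
      (ae_of_all _ fun ω => hIz ω (hYC ω))

/-- Neyman orthogonality of the grf ATE score: with true nuisance parameters
`η⁰ = (θ⁰_{1,0}, ..., θ⁰_{M-1,0}, μ⁰, p⁰_1, ..., p⁰_{M-1})` (conditional mean of `Y`,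
conditional treatment probabilities, and conditional treatment effects) and bounded
measurable perturbation directions `δθ, δμ, δp` (with `∑_d δp_d = 0`), the Gateaux
derivative of `r ↦ E[Γ^grf(O; η⁰ + r·δ)]` at `r = 0` is zero. -/
theorem grf_score_neyman_orthogonal
    {Ω 𝒳 : Type*} [MeasurableSpace Ω] [MeasurableSpace 𝒳]
    (μ : Measure Ω) [IsProbabilityMeasure μ]
    (M : ℕ) (D : Ω → Fin (M + 1)) (X : Ω → 𝒳) (Y : Ω → ℝ) (m : Fin (M + 1))
    -- true nuisance functions
    (μ0 : 𝒳 → ℝ) (μd : Fin (M + 1) → 𝒳 → ℝ) (p0 θ0 : Fin (M + 1) → 𝒳 → ℝ)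
    -- perturbation directions
    (δμ : 𝒳 → ℝ) (δp δθ : Fin (M + 1) → 𝒳 → ℝ)
    (hD : Measurable D) (hX : Measurable X) (hY : Measurable Y)
    -- boundedness / regularity
    (CY : ℝ) (hYbd : ∀ ω, |Y ω| ≤ CY)
    (Cb : ℝ)
    (hbd : ∀ x, |μ0 x| ≤ Cb ∧ |δμ x| ≤ Cb ∧
      ∀ d, |μd d x| ≤ Cb ∧ |θ0 d x| ≤ Cb ∧ |δp d x| ≤ Cb ∧ |δθ d x| ≤ Cb)
    (hmeas : Measurable μ0 ∧ Measurable δμ ∧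
      ∀ d, Measurable (μd d) ∧ Measurable (p0 d) ∧ Measurable (θ0 d) ∧
        Measurable (δp d) ∧ Measurable (δθ d))
    -- common support, uniformly in x
    (ε : ℝ) (hε : 0 < ε) (hCS : ∀ d x, ε ≤ p0 d x ∧ p0 d x ≤ 1 - ε)
    (hpsum : ∀ x, ∑ d, p0 d x = 1)
    -- the perturbations of the treatment probabilities sum to zero
    (hδpsum : ∀ x, ∑ d, δp d x = 0)
    -- defining properties of the true nuisance parameters
    (hp : ∀ d, (fun ω => p0 d (X ω)) =ᵐ[μ]
      condExp (MeasurableSpace.comap X inferInstance) μ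
        (fun ω => if D ω = d then (1 : ℝ) else 0))
    (hμd : ∀ d, (fun ω => p0 d (X ω) * μd d (X ω)) =ᵐ[μ]
      condExp (MeasurableSpace.comap X inferInstance) μ
        (fun ω => if D ω = d then Y ω else 0))
    (hμ0 : ∀ x, μ0 x = ∑ d, p0 d x * μd d x)
    (hθ : ∀ d x, θ0 d x = μd d x - μd 0 x) :
    HasDerivAt (fun r : ℝ =>
      ∫ ω,
        (θ0 m (X ω) + r * δθ m (X ω)
          + (if D ω = m then (1 : ℝ) else 0)
            * (Y ω - μ0 (X ω) - r * δμ (X ω)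
                + (∑ d ∈ Finset.univ.filter (fun d => d ≠ (0 : Fin (M + 1))),
                    (p0 d (X ω) + r * δp d (X ω)) * (θ0 d (X ω) + r * δθ d (X ω)))
                - θ0 m (X ω) - r * δθ m (X ω))
            / (p0 m (X ω) + r * δp m (X ω))
          - (if D ω = (0 : Fin (M + 1)) then (1 : ℝ) else 0)
            * (Y ω - μ0 (X ω) - r * δμ (X ω)
                + ∑ d ∈ Finset.univ.filter (fun d => d ≠ (0 : Fin (M + 1))),
                    (p0 d (X ω) + r * δp d (X ω)) * (θ0 d (X ω) + r * δθ d (X ω)))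
            / (1 - ∑ d ∈ Finset.univ.filter (fun d => d ≠ (0 : Fin (M + 1))),
                    (p0 d (X ω) + r * δp d (X ω)))) ∂μ)
      0 0 := by
  obtain ⟨-, hδμm, hdm⟩ := hmeas
  choose hμdm hpm hθm hδpm hδθm using hdm
  choose hμ0b hδμb hbd using hbd
  choose hμdb hθb hδpb hδθb using hbd
  obtain ⟨ω₀⟩ := nonempty_of_isProbabilityMeasure μ
  have hCb : 0 ≤ Cb := (abs_nonneg _).trans (hμ0b (X ω₀))
  have hCY : 0 ≤ CY := (abs_nonneg _).trans (hYbd ω₀)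
  have hp1 : ∀ d x, |p0 d x| ≤ 1 := fun d x =>
    abs_le.mpr ⟨by linarith [(hCS d x).1], by linarith [(hCS d x).2]⟩
  set S := Finset.univ.filter (fun d => d ≠ (0 : Fin (M + 1))) with hS_def
  set s₁ : 𝒳 → ℝ := fun x => ∑ d ∈ S, (p0 d x * δθ d x + δp d x * θ0 d x)
  set s₂ : 𝒳 → ℝ := fun x => ∑ d ∈ S, δp d x * δθ d x
  set K := Cb + Cb * Cb
  have hCbK : Cb ≤ K := le_add_of_nonneg_right (mul_nonneg hCb hCb)
  have hSK : 0 ≤ S.card * K := by positivity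
  have hs₁ : ∀ x, |s₁ x| ≤ S.card * K := fun x => abs_sum_le_card_mul S fun d _ => by
    calc |p0 d x * δθ d x + δp d x * θ0 d x|
      _ ≤ |p0 d x| * |δθ d x| + |δp d x| * |θ0 d x| := by
          rw [← abs_mul, ← abs_mul]; exact abs_add_le _ _
      _ ≤ 1 * Cb + Cb * Cb := by gcongr; exacts [hp1 d x, hδθb x d, hδpb x d, hθb x d]
      _ = K := by ring
  have hs₂ : ∀ x, |s₂ x| ≤ S.card * K := fun x => abs_sum_le_card_mul S fun d _ => by
    rw [abs_mul]
    nlinarith [abs_nonneg (δp d x), abs_nonneg (δθ d x), hδpb x d, hδθb x d]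
  set C := CY + 1 + (S.card + 2) * K
  have arm := fun d β (hβ : Measurable β) (hβC : ∀ x, |β x| ≤ C) =>
    hasDerivAt_integral_ipw hX (I := fun ω => if D ω = d then 1 else 0) (Y := Y)
      (m := μd d) (β := β) (γ := s₂) (p := p0 d) (δ := δp d) (C := C) hε
      ((measurable_const.ite (hD (measurableSet_singleton d)) measurable_const).aemeasurable)
      hY.aemeasurable (hμdm d) hβ (by fun_prop) (hpm d) (hδpm d)
      (fun ω => by split_ifs <;> simp) (fun ω => by linarith [hYbd ω])
      (fun x => by linarith [hμdb x d]) hβC (fun x => by linarith [hs₂ x])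
      (fun x => by linarith [hp1 d x]) (fun x => by linarith [hδpb x d])
      (fun x => (hCS d x).1) (hp d) (by simpa only [ite_mul, one_mul, zero_mul] using hμd d)
  obtain ⟨hint_m, hder_m⟩ := arm m (fun x => s₁ x - δμ x - δθ m x) (by fun_prop) fun x => by
    linarith [abs_sub (s₁ x - δμ x) (δθ m x), abs_sub (s₁ x) (δμ x), hs₁ x, hδμb x, hδθb x m]
  obtain ⟨hint_0, hder_0⟩ := arm 0 (fun x => s₁ x - δμ x) (by fun_prop) fun x => by
    linarith [abs_sub (s₁ x) (δμ x), hs₁ x, hδμb x]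
  have hint_X : ∀ {f : 𝒳 → ℝ} {B : ℝ}, Measurable f → (∀ x, |f x| ≤ B) →
      Integrable (fun ω => f (X ω)) μ := fun hf hfB =>
    Integrable.of_bound (hf.comp hX).aestronglyMeasurable _ (ae_of_all _ fun ω => hfB (X ω))
  have hint_θ := hint_X (hθm m) fun x => hθb x m
  have hint_δθ := hint_X (hδθm m) fun x => hδθb x m
  have hint_lin : ∀ r, Integrable (fun ω => θ0 m (X ω) + r * δθ m (X ω)) μ := fun r =>
    hint_θ.fun_add (hint_δθ.const_mul r)
  have hS : ∀ r x, ∑ d ∈ S, (p0 d x + r * δp d x) * (θ0 d x + r * δθ d x)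
      = μ0 x - μd 0 x + r * s₁ x + r ^ 2 * s₂ x := fun r x => by
    have hpθ : ∑ d ∈ S, p0 d x * θ0 d x = μ0 x - μd 0 x := by
      simp only [hθ]
      rw [hS_def, sum_filter_ne_mul_sub _ 0 (hpsum x), hμ0]
    rw [sum_affine_mul_affine, hpθ]
  have hden : ∀ r x, 1 - ∑ d ∈ S, (p0 d x + r * δp d x) = p0 0 x + r * δp 0 x := fun r x =>
    one_sub_sum_filter_ne 0 <| by
      rw [Finset.sum_add_distrib, ← Finset.mul_sum, hpsum, hδpsum, mul_zero, add_zero]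
  refine ((((hasDerivAt_integral_add_mul hint_θ hint_δθ 0).add hder_m).sub
    hder_0).congr_of_eventuallyEq ?_).congr_deriv ?_
  · filter_upwards [hint_m, hint_0] with r him hi0
    rw [Pi.sub_apply, Pi.add_apply, ← integral_add (hint_lin r) him,
      ← integral_sub ((hint_lin r).fun_add him) hi0]
    refine integral_congr_ae (ae_of_all _ fun ω => ?_)
    simp only [hS, hden, hθ m]
    ring
  · rw [integral_sub (hint_X (f := fun x => s₁ x - δμ x) (by fun_prop) fun x =>
      (abs_sub _ _).trans (add_le_add (hs₁ x) (hδμb x))) hint_δθ]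
    ring
end
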